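/- Every r-maximal set has intrinsic density 1; that is, if C ⊆ ℕ is a computably enumerable set whose complement is r-cohesive, then for every computable permutation π : ℕ → ℕ, the image π(C) has asymptotic density 1. -/

import Mathlib

/-!
An r-cohesive set `D` is, for every `k`, almost contained in one residue class mod `k`: the
`k` classes are computable and cover `D`, so one of them meets `D` infinitely, and then its
complement can meet `D` only finitely. Hence the upper density of `D` is at most `1 / k` for
every `k`, i.e. `D` has density `0`. Preimages of computable sets under a computable injection
are computable, so `π '' Cᶜ = (π '' C)ᶜ` is again r-cohesive and has density `0`.
-/

open Filter

open scoped Classical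

/-- The `n`-th partial density of `S ⊆ ℕ`: `|S ∩ [0,n)| / n`. -/
noncomputable def partialDensity (S : Set ℕ) (n : ℕ) : ℝ :=
  (((Finset.range n).filter (fun m => m ∈ S)).card : ℝ) / n

/-- `S` has asymptotic density `d`. -/
def HasDensity (S : Set ℕ) (d : ℝ) : Prop :=
  Tendsto (partialDensity S) atTop (nhds d)

/-- The upper asymptotic density of `S`. -/
noncomputable def upperDensity (S : Set ℕ) : ℝ :=
  limsup (partialDensity S) atTop

/-- The lower asymptotic density of `S`. -/
noncomputable def lowerDensity (S : Set ℕ) : ℝ :=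
  liminf (partialDensity S) atTop

/-- A computable permutation of `ℕ`. -/
def ComputablePerm (π : ℕ → ℕ) : Prop :=
  Function.Bijective π ∧ Computable π

/-- `A` is computably enumerable: the domain of a partial computable function. -/
def CE (A : Set ℕ) : Prop :=
  ∃ f : ℕ →. ℕ, Partrec f ∧ ∀ n, n ∈ A ↔ (f n).Dom

/-- The principal function of `S`: `p_S n` is the least `x` with `|S ∩ [0,x)| ≥ n`. -/
noncomputable def principalFn (S : Set ℕ) (n : ℕ) : ℕ :=
  sInf {x | n ≤ ((Finset.range x).filter (fun m => m ∈ S)).card}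

/-- An infinite set `C` is r-cohesive if no computable set splits it into two
infinite pieces. -/
def RCohesive (C : Set ℕ) : Prop :=
  C.Infinite ∧ ¬∃ R : Set ℕ, ComputablePred (fun n => n ∈ R) ∧
    (R ∩ C).Infinite ∧ (Rᶜ ∩ C).Infinite

theorem ComputablePred.comp {α β : Type*} [Primcodable α] [Primcodable β] {p : β → Prop}
    {f : α → β} (hp : ComputablePred p) (hf : Computable f) : ComputablePred fun a => p (f a) := by
  classical
  exact (hp.decide.comp hf).computablePred

theorem Nat.computablePred_modEq (k i : ℕ) : ComputablePred (· ≡ i [MOD k]) :=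
  (PrimrecRel.comp Primrec.eq (Primrec.nat_mod.comp .id (.const k)) (.const (i % k))).computablePred

theorem partialDensity_nonneg (S : Set ℕ) (n : ℕ) : 0 ≤ partialDensity S n := by
  unfold partialDensity
  positivity

theorem partialDensity_mono {S T : Set ℕ} (h : S ⊆ T) (n : ℕ) :
    partialDensity S n ≤ partialDensity T n := by
  unfold partialDensity
  gcongr

theorem partialDensity_union_le (S T : Set ℕ) (n : ℕ) :
    partialDensity (S ∪ T) n ≤ partialDensity S n + partialDensity T n := by
  unfold partialDensity
  rw [← add_div]
  gcongr
  refine mod_cast (Finset.card_le_card fun m hm => ?_).trans (Finset.card_union_le _ _)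
  simp only [Finset.mem_filter, Finset.mem_union, Set.mem_union] at hm ⊢
  tauto

theorem partialDensity_compl (S : Set ℕ) {n : ℕ} (hn : n ≠ 0) :
    partialDensity Sᶜ n = 1 - partialDensity S n := by
  have hcard := Finset.card_filter_add_card_filter_not (s := Finset.range n) (· ∈ S)
  rw [Finset.card_range] at hcard
  unfold partialDensity
  rw [eq_sub_iff_add_eq, ← add_div, div_eq_one_iff_eq (by exact_mod_cast hn)]
  simp only [Set.mem_compl_iff]
  exact_mod_cast (add_comm _ _).trans hcard

theorem HasDensity.compl {S : Set ℕ} {d : ℝ} (h : HasDensity S d) : HasDensity Sᶜ (1 - d) := by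
  refine (tendsto_const_nhds.sub h).congr' ?_
  filter_upwards [eventually_ne_atTop 0] with n hn
  exact (partialDensity_compl S hn).symm

theorem Set.Finite.hasDensity_zero {F : Set ℕ} (hF : F.Finite) : HasDensity F 0 := by
  have hle : ∀ n, partialDensity F n ≤ hF.toFinset.card / n := fun n => by
    unfold partialDensity
    gcongr
    exact fun m hm => hF.mem_toFinset.2 (Finset.mem_filter.1 hm).2
  exact squeeze_zero (partialDensity_nonneg F) hle
    (tendsto_const_div_atTop_nhds_zero_nat _)

theorem partialDensity_eq_count (S : Set ℕ) [DecidablePred (· ∈ S)] (n : ℕ) :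
    partialDensity S n = Nat.count (· ∈ S) n / n := by
  unfold partialDensity
  rw [Nat.count_eq_card_filter_range]
  congr

theorem partialDensity_modEq_le {k : ℕ} (hk : 0 < k) (i n : ℕ) :
    partialDensity {m | m ≡ i [MOD k]} n ≤ 1 / k + 1 / n := by
  rw [partialDensity_eq_count]
  rcases Nat.eq_zero_or_pos n with rfl | hn
  · simp only [CharP.cast_eq_zero, div_zero]
    positivity
  have hcount : (Nat.count (· ∈ {m | m ≡ i [MOD k]}) n : ℝ) ≤ n / k + 1 :=
    calc _ ≤ ((n / k + 1 : ℕ) : ℝ) := by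
          gcongr
          change Nat.count (· ≡ i [MOD k]) n ≤ _
          rw [Nat.count_modEq_card n hk]
          split_ifs <;> omega
      _ ≤ n / k + 1 := by push_cast; gcongr; exact Nat.cast_div_le
  calc _ ≤ ((n : ℝ) / k + 1) / n := by gcongr
    _ = 1 / k + 1 / n := by field_simp

theorem hasDensity_zero_of_forall_exists_finite_diff_modEq {D : Set ℕ}
    (h : ∀ k, 0 < k → ∃ i, (D \ {m | m ≡ i [MOD k]}).Finite) : HasDensity D 0 := by
  refine tendsto_order.2 ⟨fun a ha => Eventually.of_forall fun n =>
    ha.trans_le (partialDensity_nonneg D n), fun ε hε => ?_⟩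
  obtain ⟨k, hk⟩ := exists_nat_one_div_lt hε
  obtain ⟨i, hfin⟩ := h (k + 1) k.succ_pos
  set R := {m | m ≡ i [MOD k + 1]}
  have hbound : ∀ n : ℕ, partialDensity D n ≤
      partialDensity (D \ R) n + (1 / ((k + 1 : ℕ) : ℝ) + 1 / n) := fun n =>
    calc partialDensity D n ≤ partialDensity (D \ R ∪ R) n :=
          partialDensity_mono (Set.subset_sdiff_union D R) n
      _ ≤ partialDensity (D \ R) n + partialDensity R n := partialDensity_union_le _ _ n
      _ ≤ _ := by gcongr; exact partialDensity_modEq_le (by omega) i n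
  have hlim : Tendsto (fun n : ℕ => partialDensity (D \ R) n + (1 / ((k + 1 : ℕ) : ℝ) + 1 / n))
      atTop (nhds (0 + (1 / ((k + 1 : ℕ) : ℝ) + 0))) :=
    hfin.hasDensity_zero.add (tendsto_const_nhds.add tendsto_one_div_atTop_nhds_zero_nat)
  have hlt : 0 + (1 / ((k + 1 : ℕ) : ℝ) + 0) < ε := by simpa using hk
  filter_upwards [hlim.eventually (gt_mem_nhds hlt)] with n hn
  exact (hbound n).trans_lt hn

theorem RCohesive.exists_finite_diff_modEq {D : Set ℕ} (hD : RCohesive D) {k : ℕ} (hk : 0 < k) :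
    ∃ i, (D \ {m | m ≡ i [MOD k]}).Finite := by
  obtain ⟨i, hi⟩ : ∃ i, ({m | m ≡ i [MOD k]} ∩ D).Infinite := by
    by_contra! hfin
    refine hD.1 ((Set.finite_iUnion fun i : Fin k => hfin i).subset fun m hm => ?_)
    exact Set.mem_iUnion.2 ⟨⟨m % k, Nat.mod_lt m hk⟩, (Nat.mod_modEq m k).symm, hm⟩
  refine ⟨i, Set.not_infinite.1 fun hout =>
    hD.2 ⟨{m | m ≡ i [MOD k]}, Nat.computablePred_modEq k i, hi, ?_⟩⟩
  rwa [Set.inter_comm, ← Set.sdiff_eq]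

theorem RCohesive.hasDensity_zero {D : Set ℕ} (hD : RCohesive D) : HasDensity D 0 :=
  hasDensity_zero_of_forall_exists_finite_diff_modEq fun _ hk => hD.exists_finite_diff_modEq hk

theorem RCohesive.image {D : Set ℕ} (hD : RCohesive D) {f : ℕ → ℕ} (hinj : f.Injective)
    (hf : Computable f) : RCohesive (f '' D) := by
  refine ⟨hD.1.image hinj.injOn, fun ⟨R, hR, hin, hout⟩ => hD.2 ⟨f ⁻¹' R, hR.comp hf, ?_, ?_⟩⟩
  · exact Set.Infinite.of_image f (by rwa [Set.image_preimage_inter])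
  · exact Set.Infinite.of_image f (by rwa [← Set.preimage_compl, Set.image_preimage_inter])

theorem rMaximal_intrinsicDensity_one_general (C : Set ℕ)
    (hrc : RCohesive Cᶜ) :
    ∀ π : ℕ → ℕ, ComputablePerm π → HasDensity (π '' C) 1 := by
  intro π hπ
  have h := (hrc.image hπ.1.injective hπ.2).hasDensity_zero.compl
  rwa [← Set.image_compl_eq hπ.1, compl_compl, sub_zero] at h

theorem rMaximal_intrinsicDensity_one (C : Set ℕ) (hce : CE C)
    (hrc : RCohesive Cᶜ) :
    ∀ π : ℕ → ℕ, ComputablePerm π → HasDensity (π '' C) 1 :=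
  rMaximal_intrinsicDensity_one_general C hrc
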